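/- arXiv:1612.04169 — 3 statements merged into one kernel-verified Lean document; each statement's English description precedes it below -/
import Mathlib

section
/- Let A be a finite α-separated set in the hyperbolic plane with |A| ≥ 1, and let K be the convex hull of the α-neighborhood A_α. Assume Vol(K) ≤ C₀ · Vol(A_α) for a constant C₀ (Borbély's theorem). Then there exist constants c > 0 and c' > 0, depending only on α and C₀, such that at least c·|A| points of A are at distance at most c' from the boundary ∂K of the convex hull. -/
open UpperHalfPlane MeasureTheory

noncomputable instance : MeasurableSpace UpperHalfPlane := borel _
instance : BorelSpace UpperHalfPlane := ⟨rfl⟩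

/-- Hyperbolic area: the 2-dimensional Hausdorff measure on the hyperbolic plane. -/
noncomputable def hypVol : Measure UpperHalfPlane := Measure.hausdorffMeasure 2

/-- A geodesic segment from `x` to `y`, parametrized by arclength. -/
def IsGeodesicSegment {X : Type*} [MetricSpace X] (f : ℝ → X) (x y : X) : Prop :=
  f 0 = x ∧ f (dist x y) = y ∧
    ∀ s ∈ Set.Icc (0 : ℝ) (dist x y), ∀ t ∈ Set.Icc (0 : ℝ) (dist x y),
      dist (f s) (f t) = |s - t|

/-- A set is (geodesically) convex if it contains every geodesic between its points. -/
def GeodesicallyConvex {X : Type*} [MetricSpace X] (A : Set X) : Prop :=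
  ∀ x ∈ A, ∀ y ∈ A, ∀ f : ℝ → X, IsGeodesicSegment f x y →
    ∀ t ∈ Set.Icc (0 : ℝ) (dist x y), f t ∈ A

/-- The (geodesic) convex hull: intersection of all convex sets containing `A`. -/
def gConvexHull {X : Type*} [MetricSpace X] (A : Set X) : Set X :=
  ⋂₀ {K : Set X | GeodesicallyConvex K ∧ A ⊆ K}

/-!
Call a point of `A` deep if it is farther than `α/2 + t` from `∂K`. Balls of `ℍ` are connected,
so the ball of radius `α/2 + t` about a deep point lies in `K`, and the balls of radius `α/2`
about the points of `A` are disjoint. The vertical squeeze `x + iy ↦ x + i e^{-t} y` moves every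
point by exactly `t` and multiplies the area `dx dy / y²` by `e^t`, so it carries the small balls
about the deep points injectively into `K`:
`e^t · #deep · Area(B(α/2)) ≤ Area(K) ≲ Vol(K) ≤ C₀ Vol(A_α) ≲ C₀ |A|`.
For `t` large, at most half of the points are deep.

The volume hypothesis compares `toReal`s, which are junk for infinite volumes, so `Vol(K) < ∞`
is needed too: `K` is bounded since it lies in a horoball at `∞` and in a horoball at `0`, and
horoballs are geodesically convex.
-/

open Metric Set Real Bornology
open scoped ENNReal MatrixGroups

theorem IsPreconnected.subset_of_disjoint_frontier {X : Type*} [TopologicalSpace X]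
    {s t : Set X} (hs : IsPreconnected s) (hst : (s ∩ t).Nonempty)
    (hfr : Disjoint s (frontier t)) : s ⊆ t := by
  have hcover : s ⊆ interior t ∪ interior tᶜ := fun x hx ↦ by
    by_contra h
    simp only [interior_compl, mem_union, mem_compl_iff, not_or, not_not] at h
    exact hfr.notMem_of_mem_left hx ⟨h.2, h.1⟩
  obtain ⟨x, hxs, hxt⟩ := hst
  have hxint : x ∈ interior t := by
    by_contra h
    exact hfr.notMem_of_mem_left hxs ⟨subset_closure hxt, h⟩
  refine (hs.subset_left_of_subset_union isOpen_interior isOpen_interior ?_ hcover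
    ⟨x, hxs, hxint⟩).trans interior_subset
  rw [interior_compl]
  exact disjoint_compl_right.mono_right (compl_subset_compl.mpr interior_subset_closure)

theorem setOf_exists_dist_le_eq_biUnion {X : Type*} [PseudoMetricSpace X] (A : Finset X)
    (r : ℝ) : {x | ∃ a ∈ A, dist x a ≤ r} = ⋃ a ∈ A, closedBall a r := by
  ext; simp

theorem ENNReal.le_ofReal_mul_of_toReal_le {a b : ℝ≥0∞} {c : ℝ} (ha : a ≠ ∞)
    (h : a.toReal ≤ c * b.toReal) : a ≤ ENNReal.ofReal c * b :=
  calc a = ENNReal.ofReal a.toReal := (ENNReal.ofReal_toReal ha).symm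
    _ ≤ ENNReal.ofReal (c * b.toReal) := ENNReal.ofReal_le_ofReal h
    _ = ENNReal.ofReal c * ENNReal.ofReal b.toReal := ENNReal.ofReal_mul' ENNReal.toReal_nonneg
    _ ≤ ENNReal.ofReal c * b := by gcongr; exact ENNReal.ofReal_toReal_le

theorem Real.sinh_le_mul_exp {r : ℝ} (hr : 0 ≤ r) : sinh r ≤ r * exp r := by
  have h₁ := add_one_le_exp (-r)
  have h₂ : exp r * exp (-r) = 1 := by rw [← exp_add, add_neg_cancel, exp_zero]
  have h₃ := one_le_exp hr
  rw [sinh_eq]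
  nlinarith [exp_pos r, exp_pos (-r)]

theorem ofReal_inv_sq_mul_volume_closedBall {k ρ : ℝ} (hk : 0 < k) (hρ : 0 ≤ ρ) (c : ℂ) :
    ENNReal.ofReal (k⁻¹ ^ 2) * volume (closedBall c ρ) =
      ENNReal.ofReal (π * (ρ / k) ^ 2) := by
  rw [Complex.volume_closedBall, ← ENNReal.ofReal_pow hρ, ← ENNReal.ofReal_coe_nnreal,
    NNReal.coe_real_pi, ← ENNReal.ofReal_mul (by positivity),
    ← ENNReal.ofReal_mul (by positivity)]
  congr 1
  field_simp

namespace Complex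

noncomputable def verticalScale (c : ℝ) : ℂ →ₗ[ℝ] ℂ where
  toFun w := ⟨w.re, c * w.im⟩
  map_add' v w := by apply Complex.ext <;> simp [mul_add]
  map_smul' a w := by apply Complex.ext <;> simp [mul_left_comm]

@[simp] theorem verticalScale_re (c : ℝ) (w : ℂ) : (verticalScale c w).re = w.re := rfl

@[simp] theorem verticalScale_im (c : ℝ) (w : ℂ) : (verticalScale c w).im = c * w.im := rfl

theorem det_verticalScale (c : ℝ) : LinearMap.det (verticalScale c) = c := by
  rw [← LinearMap.det_toMatrix basisOneI, Matrix.det_fin_two]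
  simp [LinearMap.toMatrix_apply, verticalScale, basisOneI]

theorem verticalScale_injective {c : ℝ} (hc : c ≠ 0) : Function.Injective (verticalScale c) :=
  fun v w h ↦ Complex.ext (by simpa using congr_arg re h)
    (mul_left_cancel₀ hc (by simpa using congr_arg im h))

end Complex

section GeodesicConvexity

variable {X : Type*} [MetricSpace X]

theorem IsGeodesicSegment.dist_add_dist {f : ℝ → X} {x y : X} (hf : IsGeodesicSegment f x y)
    {t : ℝ} (ht : t ∈ Icc 0 (dist x y)) : dist x (f t) + dist (f t) y = dist x y := by
  obtain ⟨hf0, hfd, hiso⟩ := hf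
  have h0 : (0 : ℝ) ∈ Icc 0 (dist x y) := ⟨le_rfl, dist_nonneg⟩
  have hd : dist x y ∈ Icc 0 (dist x y) := ⟨dist_nonneg, le_rfl⟩
  have h1 := hiso 0 h0 t ht
  have h2 := hiso t ht _ hd
  rw [hf0] at h1
  rw [hfd] at h2
  rw [h1, h2, zero_sub, abs_neg, abs_of_nonneg ht.1, abs_of_nonpos (sub_nonpos.mpr ht.2)]
  ring

theorem GeodesicallyConvex.of_dist_add_dist_eq {S : Set X}
    (h : ∀ x ∈ S, ∀ y ∈ S, ∀ u, dist x u + dist u y = dist x y → u ∈ S) :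
    GeodesicallyConvex S :=
  fun x hx y hy _ hf _ ht ↦ h x hx y hy _ (hf.dist_add_dist ht)

theorem subset_gConvexHull (A : Set X) : A ⊆ gConvexHull A :=
  fun _ hx _ hS ↦ hS.2 hx

theorem gConvexHull_subset {A S : Set X} (hS : GeodesicallyConvex S) (hAS : A ⊆ S) :
    gConvexHull A ⊆ S :=
  sInter_subset_of_mem ⟨hS, hAS⟩

end GeodesicConvexity

namespace UpperHalfPlane

/-- The hyperbolic spheres `S(x, s)` and `S(y, t)` are Euclidean circles touching at `u`, so `u`
lies on the Euclidean segment between their centres, at heights `x.im * cosh s ≥ x.im` and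
`y.im * cosh t ≥ y.im`. -/
theorem min_im_le_of_dist_add_dist_eq {x y u : ℍ} (h : dist x u + dist u y = dist x y) :
    min x.im y.im ≤ u.im := by
  set s := dist x u
  set t := dist u y
  rcases (dist_nonneg : 0 ≤ s).eq_or_lt with hs | hs
  · rw [dist_eq_zero.mp hs.symm]; exact min_le_left _ _
  rcases (dist_nonneg : 0 ≤ t).eq_or_lt with ht | ht
  · rw [dist_eq_zero.mp ht.symm]; exact min_le_right _ _
  have hr₁ : 0 < x.im * sinh s := mul_pos x.im_pos (sinh_pos_iff.mpr hs)
  have hr₂ : 0 < y.im * sinh t := mul_pos y.im_pos (sinh_pos_iff.mpr ht)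
  have hu₁ : dist (x.center s : ℂ) u = x.im * sinh s := by
    rw [dist_comm]; exact dist_eq_iff_dist_coe_center_eq.mp (dist_comm u x)
  have hu₂ : dist (u : ℂ) (y.center t) = y.im * sinh t :=
    dist_eq_iff_dist_coe_center_eq.mp rfl
  have htouch : x.im * sinh s + y.im * sinh t ≤ dist (x.center s : ℂ) (y.center t) := by
    rw [← disjoint_ball_ball_iff hr₁ hr₂, ← image_coe_ball, ← image_coe_ball]
    exact (ball_disjoint_ball h.le).image isEmbedding_coe.injective.injOn (subset_univ _)
      (subset_univ _)
  have hbtw : Wbtw ℝ (x.center s : ℂ) u (y.center t) :=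
    dist_add_dist_eq_iff.mp (le_antisymm (by rw [hu₁, hu₂]; exact htouch) (dist_triangle _ _ _))
  obtain ⟨θ, ⟨hθ₀, hθ₁⟩, hθ⟩ := hbtw
  have hu : u.im = (1 - θ) * (x.im * cosh s) + θ * (y.im * cosh t) := by
    rw [← coe_im, ← hθ, AffineMap.lineMap_apply_module]
    simp
  have hx : x.im ≤ x.im * cosh s := le_mul_of_one_le_right x.im_pos.le (one_le_cosh s)
  have hy : y.im ≤ y.im * cosh t := le_mul_of_one_le_right y.im_pos.le (one_le_cosh t)
  rw [hu]
  nlinarith [min_le_left x.im y.im, min_le_right x.im y.im]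

theorem geodesicallyConvex_setOf_le_im {f : ℍ → ℍ} (hf : Isometry f) (m : ℝ) :
    GeodesicallyConvex {z | m ≤ (f z).im} :=
  .of_dist_add_dist_eq fun x hx y hy u hu ↦ (le_min hx hy).trans <|
    min_im_le_of_dist_add_dist_eq (by simpa only [hf.dist_eq] using hu)

theorem im_modular_S_smul (z : ℍ) : (ModularGroup.S • z).im = z.im / Complex.normSq z := by
  rw [modular_S_smul]
  simp [Complex.inv_im, neg_div]

theorem isometry_modular_S_smul : Isometry (ModularGroup.S • · : ℍ → ℍ) :=
  isometry_smul ℍ ((ModularGroup.S : SL(2, ℤ)) : SL(2, ℝ))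

theorem isBounded_iff_exists_forall_le_im_norm_le {s : Set ℍ} :
    IsBounded s ↔ ∃ m > 0, ∃ R > 0, ∀ z ∈ s, m ≤ z.im ∧ ‖(z : ℂ)‖ ≤ R := by
  constructor
  · intro hs
    obtain ⟨r, hr⟩ := (isBounded_iff_subset_closedBall I).mp hs
    refine ⟨exp (-r), exp_pos _, exp r, exp_pos _, fun z hz ↦ ⟨?_, ?_⟩⟩
    · calc exp (-r) ≤ I.im / exp (dist I z) := by
            rw [I_im, one_div, ← exp_neg, exp_le_exp, neg_le_neg_iff, dist_comm]
            exact hr hz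
        _ ≤ z.im := im_div_exp_dist_le I z
    · calc ‖(z : ℂ)‖ ≤ ‖(I : ℂ)‖ + dist (z : ℂ) I := by
            rw [dist_eq_norm]; exact norm_le_insert' _ _
        _ ≤ 1 + I.im * (exp (dist z I) - 1) := by
            rw [coe_I, Complex.norm_I]
            exact add_le_add_right (dist_coe_le z I) 1
        _ ≤ exp r := by
            rw [I_im, one_mul, add_sub_cancel, exp_le_exp]
            exact hr hz
  · rintro ⟨m, hm, R, -, hs⟩
    refine (isBounded_iff_subset_closedBall I).mpr
      ⟨(R + 1) / √m, fun z hz ↦ ?_⟩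
    obtain ⟨hmz, hzR⟩ := hs z hz
    calc dist z I ≤ dist (z : ℂ) I / √(z.im * I.im) := dist_le_dist_coe_div_sqrt z I
      _ ≤ (R + 1) / √m := by
          rw [I_im, mul_one]
          refine div_le_div₀ (by linarith [norm_nonneg (z : ℂ)]) ?_ (sqrt_pos.mpr hm)
            (sqrt_le_sqrt hmz)
          calc dist (z : ℂ) I ≤ ‖(z : ℂ)‖ + ‖(I : ℂ)‖ := dist_le_norm_add_norm _ _
            _ ≤ R + 1 := by simpa using hzR

theorem isBounded_gConvexHull {s : Set ℍ} (hs : IsBounded s) : IsBounded (gConvexHull s) := by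
  obtain ⟨m, hm, R, hR, hsR⟩ := isBounded_iff_exists_forall_le_im_norm_le.mp hs
  have h_inf : gConvexHull s ⊆ {z | m ≤ z.im} :=
    gConvexHull_subset (geodesicallyConvex_setOf_le_im isometry_id m) fun z hz ↦ (hsR z hz).1
  have h_zero : gConvexHull s ⊆ {z | m / R ^ 2 ≤ (ModularGroup.S • z).im} := by
    refine gConvexHull_subset (geodesicallyConvex_setOf_le_im isometry_modular_S_smul _)
      fun z hz ↦ ?_
    rw [mem_ofPred_eq, im_modular_S_smul, Complex.normSq_eq_norm_sq]
    exact div_le_div₀ z.im_pos.le (hsR z hz).1 (pow_pos (norm_pos_iff.mpr z.ne_zero) 2)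
      (pow_le_pow_left₀ (norm_nonneg _) (hsR z hz).2 2)
  refine isBounded_iff_exists_forall_le_im_norm_le.mpr
    ⟨m, hm, R ^ 2 / m, by positivity, fun z hz ↦ ⟨h_inf hz, ?_⟩⟩
  have h := h_zero hz
  have hz0 : 0 < ‖(z : ℂ)‖ := norm_pos_iff.mpr z.ne_zero
  have him : z.im ≤ ‖(z : ℂ)‖ := (le_abs_self _).trans (Complex.abs_im_le_norm _)
  rw [mem_ofPred_eq, im_modular_S_smul, Complex.normSq_eq_norm_sq,
    div_le_div_iff₀ (by positivity) (by positivity)] at h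
  rw [le_div_iff₀ hm]
  nlinarith

theorem isPreconnected_ball (z : ℍ) (r : ℝ) : IsPreconnected (ball z r) :=
  isEmbedding_coe.isInducing.isPreconnected_image.mp <| by
    rw [image_coe_ball]; exact (convex_ball _ _).isPreconnected

theorem ball_subset_of_le_infDist_frontier {K : Set ℍ} {a : ℍ} {r : ℝ} (ha : a ∈ K)
    (hr : r ≤ infDist a (frontier K)) : ball a r ⊆ K := by
  rcases le_or_gt r 0 with hr₀ | hr₀
  · simp [ball_eq_empty.mpr hr₀]
  refine (isPreconnected_ball a r).subset_of_disjoint_frontier ⟨a, mem_ball_self hr₀, ha⟩ ?_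
  refine disjoint_left.mpr fun p hp hpK ↦ ?_
  have := infDist_le_dist_of_mem (x := a) hpK
  rw [mem_ball, dist_comm] at hp
  linarith

theorem closedBall_subset_of_mem_ball_of_lt_infDist {K : Set ℍ} {a z : ℍ} {r t : ℝ}
    (ha : a ∈ K) (hfar : r + t < infDist a (frontier K)) (hz : z ∈ ball a r) :
    closedBall z t ⊆ K := by
  refine fun w hw ↦ ball_subset_of_le_infDist_frontier ha le_rfl ?_
  rw [mem_ball]
  linarith [dist_triangle w z a, mem_closedBall.mp hw, mem_ball.mp hz]

/-- Mathlib's invariant `volume` on `ℍ` is this measure `dx dy / y²`, but on a σ-algebra instance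
that is only propositionally equal to the one fixed for `hypVol`, so the density is taken here. -/
noncomputable def hypArea : Measure ℍ :=
  (volume.withDensity fun w : ℂ ↦ ENNReal.ofReal (w.im⁻¹ ^ 2)).comap (↑)

theorem hypArea_apply (s : Set ℍ) :
    hypArea s = ∫⁻ w in ((↑) : ℍ → ℂ) '' s, ENNReal.ofReal (w.im⁻¹ ^ 2) := by
  rw [hypArea, isOpenEmbedding_coe.measurableEmbedding.comap_apply, withDensity_apply']

theorem hypArea_le_of_le_im {s : Set ℍ} {m : ℝ} (hm : 0 < m) (hs : ∀ z ∈ s, m ≤ z.im) :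
    hypArea s ≤ ENNReal.ofReal (m⁻¹ ^ 2) * volume ((↑) '' s : Set ℂ) := by
  rw [hypArea_apply, ← setLIntegral_const]
  refine setLIntegral_mono measurable_const ?_
  rintro _ ⟨z, hz, rfl⟩
  exact ENNReal.ofReal_le_ofReal
    (pow_le_pow_left₀ (inv_nonneg.mpr z.im_pos.le) (inv_anti₀ hm (hs z hz)) 2)

theorem le_hypArea_of_im_le {s : Set ℍ} {M : ℝ} (hs : ∀ z ∈ s, z.im ≤ M) :
    ENNReal.ofReal (M⁻¹ ^ 2) * volume ((↑) '' s : Set ℂ) ≤ hypArea s := by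
  rw [hypArea_apply, ← setLIntegral_const]
  refine setLIntegral_mono (by fun_prop) ?_
  rintro _ ⟨z, hz, rfl⟩
  exact ENNReal.ofReal_le_ofReal (pow_le_pow_left₀
    (inv_nonneg.mpr (z.im_pos.le.trans (hs z hz))) (inv_anti₀ z.im_pos (hs z hz)) 2)

theorem hypArea_closedBall_le (z : ℍ) {r : ℝ} (hr : 0 ≤ r) :
    hypArea (closedBall z r) ≤ ENNReal.ofReal (π * (exp r * sinh r) ^ 2) := by
  have hm : 0 < z.im / exp r := by positivity
  refine (hypArea_le_of_le_im hm fun w hw ↦ ?_).trans_eq ?_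
  · exact (div_le_div_of_nonneg_left z.im_pos.le (exp_pos _) (exp_le_exp.mpr hw)).trans
      (im_div_exp_dist_le z w |>.trans_eq' (by rw [dist_comm]))
  · rw [image_coe_closedBall, ofReal_inv_sq_mul_volume_closedBall hm
      (mul_nonneg z.im_pos.le (sinh_nonneg_iff.mpr hr))]
    congr 2
    field_simp [z.im_ne_zero]

theorem le_hypArea_ball (z : ℍ) {r : ℝ} (hr : 0 ≤ r) :
    ENNReal.ofReal (π * (sinh r / exp r) ^ 2) ≤ hypArea (ball z r) := by
  have hM : 0 < z.im * exp r := by positivity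
  refine le_trans (le_of_eq ?_) (le_hypArea_of_im_le (M := z.im * exp r) fun w hw ↦
    (im_le_im_mul_exp_dist w z).trans (by gcongr; exact hw.le))
  rw [image_coe_ball, Complex.volume_ball, ← Complex.volume_closedBall (z.center r : ℂ),
    ofReal_inv_sq_mul_volume_closedBall hM (mul_nonneg z.im_pos.le (sinh_nonneg_iff.mpr hr))]
  congr 2
  field_simp [z.im_ne_zero]

theorem hypArea_le_ofReal_mul_ediam_sq {s : Set ℍ} (hs : ediam s ≤ 1) :
    hypArea s ≤ ENNReal.ofReal (π * exp 4) * ediam s ^ (2 : ℝ) := by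
  rcases s.eq_empty_or_nonempty with rfl | ⟨x, hx⟩
  · simp
  have hbdd : IsBounded s := isBounded_iff_ediam_ne_top.mpr (hs.trans_lt ENNReal.one_lt_top).ne
  set r := diam s
  have hr₀ : 0 ≤ r := diam_nonneg
  have hediam : ediam s = ENNReal.ofReal r := (ENNReal.ofReal_toReal hbdd.ediam_ne_top).symm
  have hr₁ : r ≤ 1 := by simpa using ENNReal.ofReal_le_one.mp (hediam ▸ hs)
  calc hypArea s ≤ hypArea (closedBall x r) :=
        measure_mono fun y hy ↦ dist_le_diam_of_mem hbdd hy hx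
    _ ≤ ENNReal.ofReal (π * (exp r * sinh r) ^ 2) := hypArea_closedBall_le x hr₀
    _ ≤ ENNReal.ofReal (π * (exp 4 * r ^ 2)) := by
        gcongr
        calc (exp r * sinh r) ^ 2 ≤ (exp r * (r * exp r)) ^ 2 :=
              pow_le_pow_left₀ (mul_nonneg (exp_pos r).le (sinh_nonneg_iff.mpr hr₀))
                (mul_le_mul_of_nonneg_left (sinh_le_mul_exp hr₀) (exp_pos r).le) 2
          _ = exp (4 * r) * r ^ 2 := by
              rw [show 4 * r = r + r + r + r by ring, exp_add, exp_add, exp_add]; ring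
          _ ≤ exp 4 * r ^ 2 := by gcongr; linarith
    _ = ENNReal.ofReal (π * exp 4) * ediam s ^ (2 : ℝ) := by
        rw [hediam, ENNReal.ofReal_rpow_of_nonneg hr₀ two_pos.le, ← mul_assoc,
          ENNReal.ofReal_mul (by positivity)]
        norm_num

theorem hypArea_le_ofReal_mul_hypVol (s : Set ℍ) :
    hypArea s ≤ ENNReal.ofReal (π * exp 4) * hypVol s := by
  have hC : ENNReal.ofReal (π * exp 4) ≠ 0 := (ENNReal.ofReal_pos.mpr (by positivity)).ne'
  have h := Measure.le_hausdorffMeasure 2 ((ENNReal.ofReal (π * exp 4))⁻¹ • hypArea) 1 one_pos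
    fun s hs ↦ by
      rw [Measure.smul_apply, smul_eq_mul, ENNReal.inv_mul_le_iff hC ENNReal.ofReal_ne_top]
      exact hypArea_le_ofReal_mul_ediam_sq hs
  have hs := Measure.le_iff'.mp h s
  rwa [Measure.smul_apply, smul_eq_mul, ENNReal.inv_mul_le_iff hC ENNReal.ofReal_ne_top] at hs

/-- Coordinates in `Fin 2 → ℝ` (sup metric), where `μH[2]` is Lebesgue measure
(`hausdorffMeasure_pi_real`); the value off the upper half plane is irrelevant. -/
noncomputable def ofCoords (v : Fin 2 → ℝ) : ℍ :=
  if h : 0 < v 1 then ⟨⟨v 0, v 1⟩, h⟩ else I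

theorem coe_ofCoords {v : Fin 2 → ℝ} (hv : 0 < v 1) : (ofCoords v : ℂ) = ⟨v 0, v 1⟩ := by
  simp [ofCoords, hv]

theorem lipschitzOnWith_ofCoords {m : ℝ} (hm : 0 < m) :
    LipschitzOnWith (2 / m).toNNReal ofCoords {v | m ≤ v 1} := by
  refine LipschitzOnWith.of_dist_le_mul fun v hv w hw ↦ ?_
  have hv₀ : 0 < v 1 := hm.trans_le hv
  have hw₀ : 0 < w 1 := hm.trans_le hw
  have him : ∀ u : Fin 2 → ℝ, 0 < u 1 → (ofCoords u).im = u 1 := fun u hu ↦ by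
    rw [← coe_im, coe_ofCoords hu]
  have hnum : dist (ofCoords v : ℂ) (ofCoords w) ≤ 2 * dist v w := by
    rw [coe_ofCoords hv₀, coe_ofCoords hw₀, Complex.dist_eq]
    refine (Complex.norm_le_abs_re_add_abs_im _).trans ?_
    have h₀ := dist_le_pi_dist v w 0
    have h₁ := dist_le_pi_dist v w 1
    simp only [Real.dist_eq] at h₀ h₁
    simp only [Complex.sub_re, Complex.sub_im]
    linarith
  have hden : m ≤ √((ofCoords v).im * (ofCoords w).im) := by
    rw [him v hv₀, him w hw₀, Real.le_sqrt hm.le (by positivity), sq]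
    exact mul_le_mul hv hw hm.le hv₀.le
  calc dist (ofCoords v) (ofCoords w)
      ≤ dist (ofCoords v : ℂ) (ofCoords w) / √((ofCoords v).im * (ofCoords w).im) :=
        dist_le_dist_coe_div_sqrt _ _
    _ ≤ 2 * dist v w / m := div_le_div₀ (by positivity) hnum hm hden
    _ = (2 / m).toNNReal * dist v w := by
        rw [Real.coe_toNNReal _ (by positivity)]; ring

theorem hypVol_le_of_forall_le_im_of_dist_le {s : Set ℍ} {m R : ℝ} {c : ℂ} (hm : 0 < m)
    (hs : ∀ z ∈ s, m ≤ z.im ∧ dist (z : ℂ) c ≤ R) :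
    hypVol s ≤ ENNReal.ofReal ((4 * R / m) ^ 2) := by
  rcases s.eq_empty_or_nonempty with rfl | ⟨z₀, hz₀⟩
  · simp
  have hR : 0 ≤ R := dist_nonneg.trans (hs z₀ hz₀).2
  set box := closedBall ![c.re, c.im] R ∩ {v | m ≤ v 1}
  have hsub : s ⊆ ofCoords '' box := fun z hz ↦ by
    obtain ⟨hmz, hzc⟩ := hs z hz
    refine ⟨![z.re, z.im], ⟨?_, hmz⟩, ?_⟩
    · rw [mem_closedBall, dist_pi_le_iff hR]
      intro i
      rw [Complex.dist_eq] at hzc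
      fin_cases i
      · exact (Complex.abs_re_le_norm _).trans hzc
      · exact (Complex.abs_im_le_norm _).trans hzc
    · refine UpperHalfPlane.ext ?_
      rw [coe_ofCoords (v := ![z.re, z.im]) z.im_pos]
      rfl
  calc hypVol s ≤ ((2 / m).toNNReal : ℝ≥0∞) ^ (2 : ℝ) * μH[2] box :=
        (measure_mono hsub).trans ((lipschitzOnWith_ofCoords hm).mono inter_subset_right
          |>.hausdorffMeasure_image_le two_pos.le)
    _ ≤ ENNReal.ofReal ((2 / m) ^ 2) * volume (closedBall ![c.re, c.im] R) := by
        rw [← ENNReal.ofReal_coe_nnreal, Real.coe_toNNReal _ (by positivity),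
          ENNReal.ofReal_rpow_of_nonneg (by positivity) two_pos.le]
        have hμH : (μH[2] : Measure (Fin 2 → ℝ)) = volume := by
          simpa using hausdorffMeasure_pi_real (ι := Fin 2)
        rw [hμH]
        gcongr
        · norm_num
        · exact inter_subset_left
    _ = ENNReal.ofReal ((4 * R / m) ^ 2) := by
        rw [Real.volume_pi_closedBall _ hR, ← ENNReal.ofReal_mul (by positivity)]
        congr 1
        simp only [Fintype.card_fin]
        ring

theorem hypVol_closedBall_le (z : ℍ) (r : ℝ) :
    hypVol (closedBall z r) ≤ ENNReal.ofReal ((4 * exp r * sinh r) ^ 2) := by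
  refine (hypVol_le_of_forall_le_im_of_dist_le (m := z.im / exp r) (R := z.im * sinh r)
    (c := z.center r) (by positivity) fun w hw ↦ ⟨?_, ?_⟩).trans_eq ?_
  · exact (div_le_div_of_nonneg_left z.im_pos.le (exp_pos _) (exp_le_exp.mpr hw)).trans
      (im_div_exp_dist_le z w |>.trans_eq' (by rw [dist_comm]))
  · exact dist_le_iff_dist_coe_center_le.mp hw
  · congr 2
    field_simp [z.im_ne_zero]

theorem hypVol_lt_top_of_isBounded {s : Set ℍ} (hs : IsBounded s) : hypVol s < ∞ := by
  obtain ⟨r, hr⟩ := (isBounded_iff_subset_closedBall I).mp hs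
  exact (measure_mono hr).trans_lt ((hypVol_closedBall_le I r).trans_lt ENNReal.ofReal_lt_top)

open Complex in
noncomputable def squeeze (t : ℝ) (z : ℍ) : ℍ :=
  ⟨verticalScale (exp (-t)) z, by simpa using mul_pos (exp_pos (-t)) z.im_pos⟩

theorem dist_squeeze (t : ℝ) (z : ℍ) : dist (squeeze t z) z = |t| := by
  rw [dist_of_re_eq (z := squeeze t z) (w := z) rfl, Real.dist_eq]
  change |log (exp (-t) * z.im) - log z.im| = |t|
  rw [log_mul (exp_pos _).ne' z.im_ne_zero, log_exp, add_sub_cancel_right, abs_neg]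

theorem hypArea_image_squeeze (t : ℝ) {s : Set ℍ} (hs : MeasurableSet s) :
    hypArea (squeeze t '' s) = ENNReal.ofReal (exp t) * hypArea s := by
  have hs' : MeasurableSet (((↑) : ℍ → ℂ) '' s) :=
    isOpenEmbedding_coe.measurableEmbedding.measurableSet_image.mpr hs
  set L := Complex.verticalScale (exp (-t))
  have hdet : |(LinearMap.toContinuousLinearMap L).det| = exp (-t) := by
    rw [ContinuousLinearMap.det, LinearMap.coe_toContinuousLinearMap,
      Complex.det_verticalScale, abs_of_pos (exp_pos _)]
  have hdensity : ∀ w : ℂ, ENNReal.ofReal (exp (-t)) * ENNReal.ofReal ((L w).im⁻¹ ^ 2) =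
      ENNReal.ofReal (exp t) * ENNReal.ofReal (w.im⁻¹ ^ 2) := fun w ↦ by
    rw [← ENNReal.ofReal_mul (exp_pos _).le, ← ENNReal.ofReal_mul (exp_pos _).le,
      Complex.verticalScale_im, mul_inv, mul_pow, ← mul_assoc, exp_neg, inv_inv, sq (exp t),
      ← mul_assoc, inv_mul_cancel₀ (exp_pos t).ne', one_mul]
  have himage : ((↑) : ℍ → ℂ) '' (squeeze t '' s) = L '' ((↑) '' s) := by
    rw [image_image, image_image]; rfl
  rw [hypArea_apply, hypArea_apply, himage]
  rw [lintegral_image_eq_lintegral_abs_det_fderiv_mul (f := L) volume hs'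
    (fun w _ ↦ (LinearMap.toContinuousLinearMap L).hasFDerivAt.hasFDerivWithinAt)
    (Complex.verticalScale_injective (exp_pos _).ne').injOn, hdet]
  simp_rw [hdensity]
  exact lintegral_const_mul _ (by fun_prop)

/-- The squeeze by `t` moves every point by exactly `|t|` and multiplies area by `e^t`; this is
where the non-amenability of `ℍ` enters. -/
theorem ofReal_exp_mul_hypArea_le {s K : Set ℍ} {t : ℝ} (hs : MeasurableSet s)
    (hK : ∀ z ∈ s, closedBall z |t| ⊆ K) :
    ENNReal.ofReal (exp t) * hypArea s ≤ hypArea K := by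
  rw [← hypArea_image_squeeze t hs]
  exact measure_mono <| image_subset_iff.mpr fun z hz ↦ hK z hz (dist_squeeze t z).le

theorem card_mul_le_hypArea_biUnion_ball {D : Finset ℍ} {r : ℝ} (hr : 0 ≤ r)
    (hD : (D : Set ℍ).PairwiseDisjoint (ball · r)) :
    D.card * ENNReal.ofReal (π * (sinh r / exp r) ^ 2) ≤ hypArea (⋃ a ∈ D, ball a r) := by
  rw [measure_biUnion_finset hD fun _ _ ↦ measurableSet_ball, ← nsmul_eq_mul]
  exact D.card_nsmul_le_sum _ _ fun a _ ↦ le_hypArea_ball a hr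

theorem hypVol_setOf_exists_dist_le_le (A : Finset ℍ) (r : ℝ) :
    hypVol {x | ∃ a ∈ A, dist x a ≤ r} ≤
      A.card * ENNReal.ofReal ((4 * exp r * sinh r) ^ 2) := by
  rw [setOf_exists_dist_le_eq_biUnion, ← nsmul_eq_mul]
  exact (measure_biUnion_finset_le A _).trans
    (A.sum_le_card_nsmul _ _ fun a _ ↦ hypVol_closedBall_le a r)

theorem isBounded_setOf_exists_dist_le (A : Finset ℍ) (r : ℝ) :
    IsBounded {x | ∃ a ∈ A, dist x a ≤ r} := by
  rw [setOf_exists_dist_le_eq_biUnion]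
  exact (isBounded_biUnion_finset A).mpr fun a _ ↦ isBounded_closedBall

theorem hypArea_le_of_toReal_hypVol_le {α C₀ : ℝ} (hC₀ : 0 ≤ C₀) {A : Finset ℍ}
    {Aα K : Set ℍ} (hAα : Aα = {x | ∃ a ∈ A, dist x a ≤ α}) (hK : K = gConvexHull Aα)
    (hvol : (hypVol K).toReal ≤ C₀ * (hypVol Aα).toReal) :
    hypArea K ≤ ENNReal.ofReal (π * exp 4 * C₀ * (4 * exp α * sinh α) ^ 2 * A.card) := by
  subst hAα hK
  have hK_top := hypVol_lt_top_of_isBounded <| isBounded_gConvexHull <|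
    isBounded_setOf_exists_dist_le A α
  calc _ ≤ ENNReal.ofReal (π * exp 4) * hypVol (gConvexHull _) := hypArea_le_ofReal_mul_hypVol _
    _ ≤ ENNReal.ofReal (π * exp 4) *
        (ENNReal.ofReal C₀ * (A.card * ENNReal.ofReal ((4 * exp α * sinh α) ^ 2))) := by
        gcongr
        exact (ENNReal.le_ofReal_mul_of_toReal_le hK_top.ne hvol).trans
          (by gcongr; exact hypVol_setOf_exists_dist_le_le A α)
    _ = _ := by
        rw [ENNReal.ofReal_mul' (Nat.cast_nonneg A.card),
          ENNReal.ofReal_mul' (q := (4 * exp α * sinh α) ^ 2) (by positivity),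
          ENNReal.ofReal_mul' hC₀, ENNReal.ofReal_natCast]
        ring

theorem ofReal_card_far_from_frontier_mul_le_hypArea {α t : ℝ} (hα : 0 ≤ α) (ht : 0 ≤ t)
    {A : Finset ℍ} (hsep : ∀ a ∈ A, ∀ a' ∈ A, a ≠ a' → α ≤ dist a a') {K : Set ℍ}
    (hAK : ∀ a ∈ A, a ∈ K) :
    ENNReal.ofReal ((A.filter fun a ↦ α / 2 + t < infDist a (frontier K)).card *
      (exp t * (π * (sinh (α / 2) / exp (α / 2)) ^ 2))) ≤ hypArea K := by
  set D := A.filter fun a ↦ α / 2 + t < infDist a (frontier K)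
  have hdisj : (D : Set ℍ).PairwiseDisjoint (ball · (α / 2)) := fun a ha a' ha' hne ↦
    ball_disjoint_ball <| by
      linarith [hsep a (Finset.mem_filter.mp ha).1 a' (Finset.mem_filter.mp ha').1 hne]
  have hdeep : ∀ z ∈ ⋃ a ∈ D, ball a (α / 2), closedBall z |t| ⊆ K := by
    simp only [mem_iUnion, exists_prop]
    rintro z ⟨a, ha, hz⟩
    obtain ⟨haA, hfar⟩ := Finset.mem_filter.mp ha
    exact closedBall_subset_of_mem_ball_of_lt_infDist (hAK a haA) (by rwa [abs_of_nonneg ht]) hz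
  calc _ = ENNReal.ofReal (exp t) *
        (D.card * ENNReal.ofReal (π * (sinh (α / 2) / exp (α / 2)) ^ 2)) := by
        rw [ENNReal.ofReal_mul (by positivity), ENNReal.ofReal_mul (exp_pos t).le,
          ENNReal.ofReal_natCast]
        ring
    _ ≤ ENNReal.ofReal (exp t) * hypArea (⋃ a ∈ D, ball a (α / 2)) := by
        gcongr; exact card_mul_le_hypArea_biUnion_ball (by positivity) hdisj
    _ ≤ hypArea K := ofReal_exp_mul_hypArea_le
        (Finset.measurableSet_biUnion D fun _ _ ↦ measurableSet_ball) hdeep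

end UpperHalfPlane

/-- if `A` is a finite `α`-separated set in the hyperbolic plane, `K` the convex
hull of its `α`-neighborhood `A_α`, and `Vol(K) ≤ C₀ · Vol(A_α)` (Borbély), then a proportion
`c` of the points of `A` lie within distance `c'` of `∂K`, with `c, c'` depending only
on `α, C₀`. -/
theorem stmt_7 (α C₀ : ℝ) (hα : 0 < α) (hC₀ : 0 < C₀) :
    ∃ c > (0 : ℝ), ∃ c' > (0 : ℝ),
      ∀ A : Finset UpperHalfPlane, 1 ≤ A.card →
        (∀ a ∈ A, ∀ a' ∈ A, a ≠ a' → α ≤ dist a a') →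
        ∀ (Aα K : Set UpperHalfPlane),
          Aα = {x : UpperHalfPlane | ∃ a ∈ A, dist x a ≤ α} →
          K = gConvexHull Aα →
          (hypVol K).toReal ≤ C₀ * (hypVol Aα).toReal →
          c * A.card ≤
            ((A.filter (fun a => Metric.infDist a (frontier K) ≤ c')).card : ℝ) := by
  set v := π * (sinh (α / 2) / exp (α / 2)) ^ 2
  set M := π * exp 4 * C₀ * (4 * exp α * sinh α) ^ 2
  have hv : 0 < v := by have := sinh_pos_iff.mpr (half_pos hα); positivity
  have hM : 0 < M := by have := sinh_pos_iff.mpr hα; positivity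
  set t := max 0 (log (2 * M / v))
  have ht : 2 * M ≤ exp t * v := by
    rw [← div_le_iff₀ hv]
    exact (le_exp_log _).trans (exp_le_exp.mpr (le_max_right _ _))
  refine ⟨1 / 2, by norm_num, α / 2 + t, by positivity, ?_⟩
  rintro A - hsep Aα K hAα hK hvol
  have hAK : ∀ a ∈ A, a ∈ K := fun a ha ↦
    hK ▸ subset_gConvexHull Aα (hAα ▸ ⟨a, ha, by simp [hα.le]⟩)
  have hfar := (ofReal_card_far_from_frontier_mul_le_hypArea (t := t) hα.le (le_max_left 0 _) hsep
    hAK).trans (hypArea_le_of_toReal_hypVol_le hC₀.le hAα hK hvol)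
  rw [ENNReal.ofReal_le_ofReal_iff (by positivity)] at hfar
  have hsplit : ((A.filter fun a ↦ infDist a (frontier K) ≤ α / 2 + t).card : ℝ) +
      (A.filter fun a ↦ α / 2 + t < infDist a (frontier K)).card = A.card := by
    simp_rw [← not_le]
    exact_mod_cast A.card_filter_add_card_filter_not _
  nlinarith [mul_le_mul_of_nonneg_left ht (Nat.cast_nonneg (α := ℝ)
    (A.filter fun a ↦ α / 2 + t < infDist a (frontier K)).card)]
end

section
/- In a δ-hyperbolic geodesic metric space, every (C, K)-quasi-geodesic segment lies within Hausdorff distance R of the geodesic segment joining its endpoints, where R depends only on δ, C and K (Morse lemma). -/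
open Set Metric

variable {X : Type*} [MetricSpace X]

namespace IsGeodesicSegment

variable {f : ℝ → X} {x y : X} {s t : ℝ}

theorem dist_eq (hf : IsGeodesicSegment f x y) (hs : s ∈ Icc 0 (dist x y))
    (ht : t ∈ Icc 0 (dist x y)) : dist (f s) (f t) = |s - t| :=
  hf.2.2 s hs t ht

theorem dist_left (hf : IsGeodesicSegment f x y) (hs : s ∈ Icc 0 (dist x y)) :
    dist x (f s) = s := by
  rw [← hf.1, hf.dist_eq ⟨le_rfl, dist_nonneg⟩ hs, zero_sub, abs_neg, abs_of_nonneg hs.1]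

theorem dist_right (hf : IsGeodesicSegment f x y) (hs : s ∈ Icc 0 (dist x y)) :
    dist (f s) y = dist x y - s := by
  conv_lhs => rw [← hf.2.1]
  rw [hf.dist_eq hs ⟨dist_nonneg, le_rfl⟩, abs_sub_comm, abs_of_nonneg (sub_nonneg.2 hs.2)]

theorem continuousOn (hf : IsGeodesicSegment f x y) : ContinuousOn f (Icc 0 (dist x y)) :=
  (LipschitzOnWith.of_dist_le' (K := 1) fun s hs t ht => by
    rw [hf.dist_eq hs ht, one_mul, Real.dist_eq]).continuousOn

theorem restrict (hf : IsGeodesicSegment f x y) (hs : 0 ≤ s) (hst : s ≤ t)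
    (ht : t ≤ dist x y) : IsGeodesicSegment (fun u => f (s + u)) (f s) (f t) := by
  have hmem : ∀ u ∈ Icc 0 (t - s), s + u ∈ Icc 0 (dist x y) := fun u hu =>
    ⟨by linarith [hu.1], by linarith [hu.2]⟩
  have hd : dist (f s) (f t) = t - s := by
    rw [hf.dist_eq ⟨hs, hst.trans ht⟩ ⟨hs.trans hst, ht⟩, abs_sub_comm,
      abs_of_nonneg (sub_nonneg.2 hst)]
  refine ⟨by simp, by simp only [hd, add_sub_cancel], fun u hu v hv => ?_⟩
  rw [hd] at hu hv
  rw [hf.dist_eq (hmem u hu) (hmem v hv), add_sub_add_left_eq_sub]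

end IsGeodesicSegment

def ChainIn (S : Set X) (x y : X) (m : ℕ) : Prop :=
  ∃ p : ℕ → X, p 0 = x ∧ p m = y ∧ (∀ k < m, dist (p k) (p (k + 1)) ≤ 1) ∧ ∀ k ≤ m, p k ∈ S

namespace ChainIn

variable {S T : Set X} {x y z : X} {m m' : ℕ}

theorem refl (hx : x ∈ S) (m : ℕ) : ChainIn S x x m :=
  ⟨fun _ => x, rfl, rfl, fun _ _ => by simp, fun _ _ => hx⟩

theorem mono (h : ChainIn S x y m) (hST : S ⊆ T) : ChainIn T x y m :=
  let ⟨p, h0, hm, hstep, hS⟩ := h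
  ⟨p, h0, hm, hstep, fun k hk => hST (hS k hk)⟩

theorem left_mem (h : ChainIn S x y m) : x ∈ S := by
  obtain ⟨p, rfl, -, -, hS⟩ := h
  exact hS 0 (Nat.zero_le m)

theorem right_mem (h : ChainIn S x y m) : y ∈ S := by
  obtain ⟨p, -, rfl, -, hS⟩ := h
  exact hS m le_rfl

theorem symm (h : ChainIn S x y m) : ChainIn S y x m := by
  obtain ⟨p, rfl, rfl, hstep, hS⟩ := h
  refine ⟨fun k => p (m - k), by simp, by simp, fun k hk => ?_, fun k _ => hS _ (Nat.sub_le m k)⟩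
  have hk' : m - k = m - (k + 1) + 1 := by omega
  dsimp only
  rw [hk', dist_comm]
  exact hstep _ (by omega)

theorem trans (h : ChainIn S x y m) (h' : ChainIn S y z m') : ChainIn S x z (m + m') := by
  obtain ⟨p, rfl, rfl, hstep, hS⟩ := h
  obtain ⟨q, hq0, rfl, hstep', hS'⟩ := h'
  have hq : ∀ k, m ≤ k → (if k ≤ m then p k else q (k - m)) = q (k - m) := by
    intro k hk
    split_ifs with h
    · rw [le_antisymm h hk, Nat.sub_self, hq0]
    · rfl
  refine ⟨fun k => if k ≤ m then p k else q (k - m), by simp, ?_, fun k hk => ?_, fun k hk => ?_⟩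
  · dsimp only
    rw [hq _ (Nat.le_add_right m m'), Nat.add_sub_cancel_left]
  · dsimp only
    rcases lt_or_ge k m with hkm | hkm
    · rw [if_pos hkm.le, if_pos (Nat.succ_le_of_lt hkm)]
      exact hstep k hkm
    · rw [hq k hkm, hq (k + 1) (by omega), Nat.sub_add_comm hkm]
      exact hstep' _ (by omega)
  · rcases le_or_gt k m with hkm | hkm
    · simp only [if_pos hkm]
      exact hS k hkm
    · simp only [if_neg (not_le.2 hkm)]
      exact hS' _ (by omega)

theorem mono_length (h : ChainIn S x y m) (hm : m ≤ m') : ChainIn S x y m' := by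
  simpa [Nat.add_sub_cancel' hm] using h.trans (refl h.right_mem (m' - m))

theorem split (h : ChainIn S x y m) {k : ℕ} (hk : k ≤ m) :
    ∃ w, ChainIn S x w k ∧ ChainIn S w y (m - k) := by
  obtain ⟨p, rfl, rfl, hstep, hS⟩ := h
  refine ⟨p k, ⟨p, rfl, rfl, fun i hi => hstep i (by omega), fun i hi => hS i (by omega)⟩,
    ⟨fun i => p (k + i), rfl, by simp only [Nat.add_sub_cancel' hk], fun i hi => hstep _ (by omega),
      fun i hi => hS _ (by omega)⟩⟩

theorem dist_le (h : ChainIn S x y m) : dist x y ≤ m := by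
  obtain ⟨p, rfl, rfl, hstep, -⟩ := h
  suffices ∀ k ≤ m, dist (p 0) (p k) ≤ k from this m le_rfl
  intro k hk
  induction k with
  | zero => simp
  | succ k ih =>
    calc dist (p 0) (p (k + 1)) ≤ dist (p 0) (p k) + dist (p k) (p (k + 1)) := dist_triangle ..
      _ ≤ k + 1 := add_le_add (ih (by omega)) (hstep k hk)
      _ = ↑(k + 1) := by push_cast; ring

end ChainIn

theorem IsGeodesicSegment.chainIn {f : ℝ → X} {x y : X} (hf : IsGeodesicSegment f x y) :
    ChainIn (closedBall x (dist x y)) x y ⌈dist x y⌉₊ := by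
  have hmem : ∀ k : ℕ, min (k : ℝ) (dist x y) ∈ Icc 0 (dist x y) := fun k =>
    ⟨le_min k.cast_nonneg dist_nonneg, min_le_right _ _⟩
  refine ⟨fun k => f (min (k : ℝ) (dist x y)), by simp [hf.1], ?_, fun k _ => ?_, fun k _ => ?_⟩
  · simp only [min_eq_right (Nat.le_ceil _), hf.2.1]
  · rw [hf.dist_eq (hmem k) (hmem (k + 1))]
    calc |min (k : ℝ) (dist x y) - min ((k + 1 : ℕ) : ℝ) (dist x y)|
        ≤ max |(k : ℝ) - (k + 1 : ℕ)| |dist x y - dist x y| := abs_min_sub_min_le_max ..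
      _ = 1 := by simp
  · rw [mem_closedBall, dist_comm, hf.dist_left (hmem k)]
    exact min_le_right _ _

def IsGeodesicSpace (X : Type*) [MetricSpace X] : Prop :=
  ∀ x y : X, ∃ f : ℝ → X, IsGeodesicSegment f x y

def ThinTriangles (δ : ℝ) (X : Type*) [MetricSpace X] : Prop :=
  ∀ (x y z : X) (f g h : ℝ → X),
    IsGeodesicSegment f x y → IsGeodesicSegment g y z → IsGeodesicSegment h z x →
    ∀ s ∈ Icc (0 : ℝ) (dist x y),
      ∃ w ∈ g '' Icc (0 : ℝ) (dist y z) ∪ h '' Icc (0 : ℝ) (dist z x), dist (f s) w ≤ δ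

theorem ChainIn.exists_dist_le_of_isGeodesicSegment {δ : ℝ} (hgeo : IsGeodesicSpace X)
    (hthin : ThinTriangles δ X) {S : Set X} {x y : X} {m N : ℕ} (h : ChainIn S x y m)
    (hm : m ≤ 2 ^ N) {f : ℝ → X} (hf : IsGeodesicSegment f x y) {s : ℝ}
    (hs : s ∈ Icc 0 (dist x y)) : ∃ z ∈ S, dist (f s) z ≤ δ * N + 1 / 2 := by
  induction N generalizing x y m f s with
  | zero =>
    have hxy : dist x y ≤ 1 := h.dist_le.trans (by exact_mod_cast hm)
    rcases le_total s (dist x y / 2) with hs' | hs'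
    · exact ⟨x, h.left_mem, by rw [dist_comm, hf.dist_left hs]; linarith⟩
    · exact ⟨y, h.right_mem, by rw [hf.dist_right hs]; linarith⟩
  | succ N ih =>
    rw [pow_succ] at hm
    obtain ⟨w, hxw, hwy⟩ := h.split (Nat.div_le_self m 2)
    obtain ⟨g, hg⟩ := hgeo y w
    obtain ⟨g', hg'⟩ := hgeo w x
    obtain ⟨v, hv, hfv⟩ := hthin x y w f g g' hf hg hg' s hs
    obtain ⟨z, hz, hvz⟩ : ∃ z ∈ S, dist v z ≤ δ * N + 1 / 2 := by
      rcases hv with ⟨t, ht, rfl⟩ | ⟨t, ht, rfl⟩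
      · exact ih hwy.symm (by omega) hg ht
      · exact ih hxw.symm (by omega) hg' ht
    refine ⟨z, hz, ?_⟩
    calc dist (f s) z ≤ dist (f s) v + dist v z := dist_triangle ..
      _ ≤ δ + (δ * N + 1 / 2) := add_le_add hfv hvz
      _ = δ * ↑(N + 1) + 1 / 2 := by push_cast; ring

theorem Nat.sq_le_four_mul_two_pow (N : ℕ) : N ^ 2 ≤ 4 * 2 ^ N := by
  induction N with
  | zero => simp
  | succ N ih =>
    have := N.lt_two_pow_self
    rw [pow_succ 2 N]
    nlinarith

theorem exists_le_two_pow_and_sq_le (M : ℕ) : ∃ N : ℕ, M ≤ 2 ^ N ∧ N ^ 2 ≤ 8 * M := by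
  rcases le_or_gt M 1 with hM | hM
  · exact ⟨0, by simpa using hM, by simp⟩
  refine ⟨Nat.clog 2 M, Nat.le_pow_clog one_lt_two M, ?_⟩
  have hlt := Nat.pow_pred_clog_lt_self one_lt_two hM
  obtain ⟨N, hN⟩ : ∃ N, Nat.clog 2 M = N + 1 := ⟨_, (Nat.succ_pred_eq_of_pos
    (Nat.clog_pos one_lt_two hM)).symm⟩
  rw [hN, Nat.pred_succ] at hlt
  have := Nat.sq_le_four_mul_two_pow (N + 1)
  rw [hN]
  rw [pow_succ 2 N] at this
  omega

theorem le_of_le_mul_add_of_sq_le {δ A D N : ℝ} (hδ : 0 ≤ δ) (hA : 1 ≤ 4 * A) (hN : 0 ≤ N)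
    (hD : D ≤ δ * N + 1 / 2) (hND : N ^ 2 ≤ 8 * A * D) :
    D ≤ δ * (8 * A * δ + 4 * A) + 1 / 2 := by
  have hN' : N ≤ 8 * A * δ + 4 * A := by
    by_contra! h
    -- otherwise `N ^ 2 > (8Aδ + 4A) N ≥ 8AδN + 4A ≥ 8AD`, since `N > 4A ≥ 1`
    nlinarith [mul_le_mul_of_nonneg_left hD (by linarith : (0 : ℝ) ≤ 8 * A),
      mul_nonneg (by linarith : (0 : ℝ) ≤ A) hδ]
  nlinarith [mul_le_mul_of_nonneg_left hN' hδ]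

theorem exists_chainIn_of_infDist_le (hgeo : IsGeodesicSpace X) {Γ : Set X} (hΓ : IsCompact Γ)
    (hne : Γ.Nonempty) {o a : X} {D : ℝ} (hΓD : ∀ z ∈ Γ, D ≤ dist o z)
    (ha : a ∈ Γ ∨ 2 * D ≤ dist o a) (haΓ : infDist a Γ ≤ D) :
    ∃ z ∈ Γ, dist a z ≤ D ∧ ChainIn {w | D ≤ dist o w} a z ⌈D⌉₊ := by
  rcases ha with ha | ha
  · exact ⟨a, ha, by simpa using infDist_nonneg.trans haΓ,
      ChainIn.refl (show a ∈ {w | D ≤ dist o w} from hΓD a ha) _⟩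
  obtain ⟨z, hz, hza⟩ := hΓ.exists_infDist_eq_dist hne a
  obtain ⟨f, hf⟩ := hgeo a z
  have haz : dist a z ≤ D := hza ▸ haΓ
  have hball : closedBall a (dist a z) ⊆ {w | D ≤ dist o w} := fun w hw => by
    rw [mem_closedBall, dist_comm] at hw
    show D ≤ dist o w
    linarith [dist_triangle o w a, dist_comm w a]
  exact ⟨z, hz, haz, (hf.chainIn.mono hball).mono_length (Nat.ceil_mono haz)⟩

section QuasiGeodesic

variable {n : ℕ} {γ : Fin (n + 1) → X} {C K : ℝ}

theorem chainIn_range_of_le (hstep : ∀ i : Fin n, dist (γ i.castSucc) (γ i.succ) ≤ 1)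
    {i j : Fin (n + 1)} (hij : i ≤ j) : ChainIn (range γ) (γ i) (γ j) (j - i) := by
  have hij' : (i : ℕ) ≤ j := hij
  have hj := j.isLt
  refine ⟨fun k => γ ⟨min (i + k) n, by omega⟩, ?_, ?_, fun k hk => ?_,
    fun k _ => mem_range_self _⟩
  · exact congrArg γ (Fin.ext (by simp; omega))
  · exact congrArg γ (Fin.ext (by simp; omega))
  · have hk' : (i : ℕ) + k < n := by omega
    convert hstep ⟨i + k, hk'⟩ using 3 <;> refine Fin.ext ?_ <;> simp <;> omega

theorem exists_chainIn_range (hstep : ∀ i : Fin n, dist (γ i.castSucc) (γ i.succ) ≤ 1)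
    (hquasi : ∀ i j : Fin (n + 1), i ≤ j → ((j : ℕ) : ℝ) - (i : ℕ) ≤ C * dist (γ i) (γ j) + K)
    (i j : Fin (n + 1)) :
    ∃ m : ℕ, (m : ℝ) ≤ C * dist (γ i) (γ j) + K ∧ ChainIn (range γ) (γ i) (γ j) m := by
  rcases le_total i j with hij | hji
  · exact ⟨j - i, by rw [Nat.cast_sub (show (i : ℕ) ≤ j from hij)]; exact hquasi i j hij,
      chainIn_range_of_le hstep hij⟩
  · exact ⟨i - j, by rw [dist_comm, Nat.cast_sub (show (j : ℕ) ≤ i from hji)]; exact hquasi j i hji,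
      (chainIn_range_of_le hstep hji).symm⟩

theorem exists_chainIn_avoiding (hgeo : IsGeodesicSpace X) (hC : 0 ≤ C) (hK : 0 ≤ K)
    (hstep : ∀ i : Fin n, dist (γ i.castSucc) (γ i.succ) ≤ 1)
    (hquasi : ∀ i j : Fin (n + 1), i ≤ j → ((j : ℕ) : ℝ) - (i : ℕ) ≤ C * dist (γ i) (γ j) + K)
    {o a b : X} {D : ℝ} (hD : 1 ≤ D) (hΓ : ∀ i, D ≤ dist o (γ i))
    (ha : a ∈ range γ ∨ 2 * D ≤ dist o a) (hb : b ∈ range γ ∨ 2 * D ≤ dist o b)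
    (hoa : dist o a ≤ 2 * D) (hob : dist o b ≤ 2 * D)
    (haΓ : infDist a (range γ) ≤ D) (hbΓ : infDist b (range γ) ≤ D) :
    ∃ M : ℕ, (M : ℝ) ≤ (6 * C + K + 4) * D ∧ ChainIn {w | D ≤ dist o w} a b M := by
  have hΓS : ∀ z ∈ range γ, D ≤ dist o z := by rintro _ ⟨i, rfl⟩; exact hΓ i
  have hΓc := (finite_range γ).isCompact
  obtain ⟨_, ⟨i, rfl⟩, hai, hca⟩ :=
    exists_chainIn_of_infDist_le hgeo hΓc (range_nonempty γ) hΓS ha haΓ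
  obtain ⟨_, ⟨j, rfl⟩, hbj, hcb⟩ :=
    exists_chainIn_of_infDist_le hgeo hΓc (range_nonempty γ) hΓS hb hbΓ
  obtain ⟨m, hm, hcm⟩ := exists_chainIn_range hstep hquasi i j
  have hij : dist (γ i) (γ j) ≤ 6 * D := by
    linarith [dist_triangle4 (γ i) a b (γ j), dist_triangle a o b, dist_comm (γ i) a,
      dist_comm a o]
  refine ⟨⌈D⌉₊ + m + ⌈D⌉₊, ?_, (hca.trans (hcm.mono hΓS)).trans hcb.symm⟩
  have hceil := Nat.ceil_lt_add_one (by linarith : (0 : ℝ) ≤ D)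
  push_cast
  nlinarith [mul_le_mul_of_nonneg_left hij hC]

theorem exists_detour (hgeo : IsGeodesicSpace X) (hC : 0 ≤ C) (hK : 0 ≤ K)
    (hstep : ∀ i : Fin n, dist (γ i.castSucc) (γ i.succ) ≤ 1)
    (hquasi : ∀ i j : Fin (n + 1), i ≤ j → ((j : ℕ) : ℝ) - (i : ℕ) ≤ C * dist (γ i) (γ j) + K)
    {f : ℝ → X} (hf : IsGeodesicSegment f (γ 0) (γ (Fin.last n))) {sm D : ℝ}
    (hsm : sm ∈ Icc 0 (dist (γ 0) (γ (Fin.last n)))) (hΓ : ∀ i, D ≤ dist (f sm) (γ i))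
    (hmax : ∀ s ∈ Icc 0 (dist (γ 0) (γ (Fin.last n))), infDist (f s) (range γ) ≤ D)
    (hD : 1 ≤ D) :
    ∃ M : ℕ, (M : ℝ) ≤ (6 * C + K + 4) * D ∧ ∃ (a b : X) (g : ℝ → X) (t : ℝ),
      IsGeodesicSegment g a b ∧ t ∈ Icc 0 (dist a b) ∧ g t = f sm ∧
      ChainIn {w | D ≤ dist (f sm) w} a b M := by
  set L := dist (γ 0) (γ (Fin.last n))
  set sa := max 0 (sm - 2 * D)
  set sb := min L (sm + 2 * D)
  have hsa : sa ∈ Icc 0 L := ⟨le_max_left _ _, max_le dist_nonneg (by linarith [hsm.2])⟩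
  have hsb : sb ∈ Icc 0 L := ⟨le_min dist_nonneg (by linarith [hsm.1]), min_le_left _ _⟩
  have hsasm : sa ≤ sm := max_le hsm.1 (by linarith)
  have hsmsb : sm ≤ sb := le_min hsm.2 (by linarith)
  have hoa : dist (f sm) (f sa) = sm - sa := by
    rw [hf.dist_eq hsm hsa, abs_of_nonneg (sub_nonneg.2 hsasm)]
  have hob : dist (f sm) (f sb) = sb - sm := by
    rw [hf.dist_eq hsm hsb, abs_sub_comm, abs_of_nonneg (sub_nonneg.2 hsmsb)]
  have ha : f sa ∈ range γ ∨ 2 * D ≤ dist (f sm) (f sa) := by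
    rcases le_total (sm - 2 * D) 0 with h | h
    · left; rw [show sa = 0 from max_eq_left h, hf.1]; exact mem_range_self 0
    · right; rw [hoa, show sa = sm - 2 * D from max_eq_right h]; linarith
  have hb : f sb ∈ range γ ∨ 2 * D ≤ dist (f sm) (f sb) := by
    rcases le_total L (sm + 2 * D) with h | h
    · left; rw [show sb = L from min_eq_left h, hf.2.1]; exact mem_range_self _
    · right; rw [hob, show sb = sm + 2 * D from min_eq_right h]; linarith
  obtain ⟨M, hM, hchain⟩ := exists_chainIn_avoiding hgeo hC hK hstep hquasi hD hΓ ha hb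
    (by rw [hoa]; linarith [le_max_right 0 (sm - 2 * D)])
    (by rw [hob]; linarith [min_le_right L (sm + 2 * D)]) (hmax sa hsa) (hmax sb hsb)
  have hab : dist (f sa) (f sb) = sb - sa := by
    rw [hf.dist_eq hsa hsb, abs_sub_comm, abs_of_nonneg (by linarith)]
  refine ⟨M, hM, f sa, f sb, fun u => f (sa + u), sm - sa,
    hf.restrict hsa.1 (hsasm.trans hsmsb) hsb.2, ?_, by simp, hchain⟩
  rw [hab]
  constructor <;> linarith

/-- With `A = 6C + K + 4` (see `exists_detour`), `N ^ 2 ≤ 8AD` and `D ≤ δN + 1/2` force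
`D ≤ δ (8Aδ + 4A) + 1/2`. -/
def morseConst (δ C K : ℝ) : ℝ := δ * (8 * (6 * C + K + 4) * δ + 4 * (6 * C + K + 4)) + 1

theorem one_le_morseConst {δ : ℝ} (hδ : 0 ≤ δ) (hC : 0 ≤ C) (hK : 0 ≤ K) :
    1 ≤ morseConst δ C K := by
  unfold morseConst
  have : 0 ≤ δ * (8 * (6 * C + K + 4) * δ + 4 * (6 * C + K + 4)) := by positivity
  linarith

theorem infDist_range_le_morseConst {δ : ℝ} (hgeo : IsGeodesicSpace X)
    (hthin : ThinTriangles δ X) (hδ : 0 ≤ δ) (hC : 0 ≤ C) (hK : 0 ≤ K)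
    (hstep : ∀ i : Fin n, dist (γ i.castSucc) (γ i.succ) ≤ 1)
    (hquasi : ∀ i j : Fin (n + 1), i ≤ j → ((j : ℕ) : ℝ) - (i : ℕ) ≤ C * dist (γ i) (γ j) + K)
    {f : ℝ → X} (hf : IsGeodesicSegment f (γ 0) (γ (Fin.last n))) {s : ℝ}
    (hs : s ∈ Icc 0 (dist (γ 0) (γ (Fin.last n)))) :
    infDist (f s) (range γ) ≤ morseConst δ C K := by
  obtain ⟨sm, hsm, hmax⟩ := isCompact_Icc.exists_isMaxOn (nonempty_Icc.2 dist_nonneg)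
    ((continuous_infDist_pt (range γ)).comp_continuousOn hf.continuousOn)
  refine (hmax hs).trans ?_
  set D := infDist (f sm) (range γ)
  show D ≤ morseConst δ C K
  rcases le_or_gt D 1 with hD | hD
  · exact hD.trans (one_le_morseConst hδ hC hK)
  obtain ⟨M, hM, a, b, g, t, hg, ht, hgt, hchain⟩ := exists_detour hgeo hC hK hstep hquasi hf hsm
    (fun i => infDist_le_dist_of_mem (mem_range_self i)) (fun s hs => hmax hs) hD.le
  obtain ⟨N, hMN, hNM⟩ := exists_le_two_pow_and_sq_le M
  obtain ⟨z, hz, hgz⟩ := hchain.exists_dist_le_of_isGeodesicSegment hgeo hthin hMN hg ht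
  rw [hgt] at hgz
  have hNM' : (N : ℝ) ^ 2 ≤ 8 * (6 * C + K + 4) * D := by
    have : ((N ^ 2 : ℕ) : ℝ) ≤ 8 * M := by exact_mod_cast hNM
    push_cast at this
    linarith
  have := le_of_le_mul_add_of_sq_le hδ (by linarith) N.cast_nonneg (hz.trans hgz) hNM'
  unfold morseConst
  linarith

theorem infDist_image_le (hC : 0 ≤ C)
    (hstep : ∀ i : Fin n, dist (γ i.castSucc) (γ i.succ) ≤ 1)
    (hquasi : ∀ i j : Fin (n + 1), i ≤ j → ((j : ℕ) : ℝ) - (i : ℕ) ≤ C * dist (γ i) (γ j) + K)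
    {f : ℝ → X} (hf : IsGeodesicSegment f (γ 0) (γ (Fin.last n))) {r : ℝ}
    (hr : ∀ s ∈ Icc 0 (dist (γ 0) (γ (Fin.last n))), infDist (f s) (range γ) ≤ r)
    (k : Fin (n + 1)) :
    infDist (γ k) (f '' Icc 0 (dist (γ 0) (γ (Fin.last n)))) ≤ (2 * C + 1) * r + K := by
  set I := Icc 0 (dist (γ 0) (γ (Fin.last n)))
  have hr0 : 0 ≤ r := infDist_nonneg.trans (hr 0 ⟨le_rfl, dist_nonneg⟩)
  set A := ⋃ m ∈ {m | m ≤ k}, closedBall (γ m) r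
  set B := ⋃ m ∈ {m | k ≤ m}, closedBall (γ m) r
  have hcover : f '' I ⊆ A ∪ B := by
    rintro _ ⟨s, hs, rfl⟩
    obtain ⟨_, ⟨m, rfl⟩, hm⟩ :=
      (finite_range γ).isCompact.exists_infDist_eq_dist (range_nonempty γ) (f s)
    have hfm : f s ∈ closedBall (γ m) r := by rw [mem_closedBall, ← hm]; exact hr s hs
    rcases le_total m k with hmk | hkm
    · exact Or.inl (mem_biUnion hmk hfm)
    · exact Or.inr (mem_biUnion hkm hfm)
  have hA : (f '' I ∩ A).Nonempty := ⟨f 0, mem_image_of_mem f ⟨le_rfl, dist_nonneg⟩,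
    mem_biUnion (Fin.zero_le k) (by rw [hf.1]; exact mem_closedBall_self hr0)⟩
  have hB : (f '' I ∩ B).Nonempty := ⟨f _, mem_image_of_mem f ⟨dist_nonneg, le_rfl⟩,
    mem_biUnion (Fin.le_last k) (by rw [hf.2.1]; exact mem_closedBall_self hr0)⟩
  obtain ⟨_, ⟨s, hs, rfl⟩, hsA, hsB⟩ :=
    isPreconnected_closed_iff.1 (isPreconnected_Icc.image f hf.continuousOn) A B
      ((toFinite _).isClosed_biUnion fun _ _ => isClosed_closedBall)
      ((toFinite _).isClosed_biUnion fun _ _ => isClosed_closedBall) hcover hA hB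
  obtain ⟨m₁, hm₁k, h₁⟩ := mem_iUnion₂.1 hsA
  obtain ⟨m₂, hkm₂, h₂⟩ := mem_iUnion₂.1 hsB
  rw [mem_closedBall] at h₁ h₂
  have hm₁ : dist (γ k) (γ m₁) ≤ (k : ℝ) - m₁ := by
    rw [dist_comm, ← Nat.cast_sub (show (m₁ : ℕ) ≤ k from hm₁k)]
    exact (chainIn_range_of_le hstep hm₁k).dist_le
  have hm₁₂ : ((m₂ : ℕ) : ℝ) - (m₁ : ℕ) ≤ C * (2 * r) + K := by
    refine (hquasi m₁ m₂ (hm₁k.trans hkm₂)).trans ?_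
    gcongr
    linarith [dist_triangle_left (γ m₁) (γ m₂) (f s)]
  have hkm₂' : (k : ℝ) ≤ (m₂ : ℕ) := by exact_mod_cast hkm₂
  calc infDist (γ k) (f '' I) ≤ dist (γ k) (f s) := infDist_le_dist_of_mem (mem_image_of_mem f hs)
    _ ≤ dist (γ k) (γ m₁) + dist (f s) (γ m₁) := by
        rw [dist_comm (f s)]; exact dist_triangle ..
    _ ≤ (2 * C + 1) * r + K := by linarith

end QuasiGeodesic

/-- Morse lemma: in a geodesic space with δ-thin triangles, every
(C, K)-quasi-geodesic segment (a discrete path with unit-bounded steps satisfying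
`j - i ≤ C·dist(γ i, γ j) + K`) is within Hausdorff distance `R = R(δ, C, K)` of the
geodesic segment joining its endpoints. -/
theorem stmt_9 (δ C K : ℝ) (hδ : 0 ≤ δ) (hC : 1 ≤ C) (hK : 0 ≤ K) :
    ∃ R : ℝ,
      ∀ {X : Type} [MetricSpace X],
        (∀ x y : X, ∃ f : ℝ → X, IsGeodesicSegment f x y) →
        (∀ (x y z : X) (f g h : ℝ → X),
          IsGeodesicSegment f x y → IsGeodesicSegment g y z → IsGeodesicSegment h z x →
          ∀ s ∈ Set.Icc (0 : ℝ) (dist x y),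
            ∃ w ∈ g '' Set.Icc (0 : ℝ) (dist y z) ∪ h '' Set.Icc (0 : ℝ) (dist z x),
              dist (f s) w ≤ δ) →
        ∀ (n : ℕ) (γ : Fin (n + 1) → X),
          (∀ i : Fin n, dist (γ i.castSucc) (γ i.succ) ≤ 1) →
          (∀ i j : Fin (n + 1), i ≤ j →
            ((j : ℕ) : ℝ) - (i : ℕ) ≤ C * dist (γ i) (γ j) + K) →
          ∀ f : ℝ → X, IsGeodesicSegment f (γ 0) (γ (Fin.last n)) →
            Metric.hausdorffDist (Set.range γ)
              (f '' Set.Icc (0 : ℝ) (dist (γ 0) (γ (Fin.last n)))) ≤ R := by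
  have hC₀ : 0 ≤ C := by linarith
  have hR := one_le_morseConst hδ hC₀ hK
  refine ⟨(2 * C + 1) * morseConst δ C K + K, fun {X} _ hgeo hthin n γ hstep hquasi f hf => ?_⟩
  have hnear := fun s (hs : s ∈ Icc _ _) =>
    infDist_range_le_morseConst hgeo hthin hδ hC₀ hK hstep hquasi hf hs
  refine hausdorffDist_le_of_infDist (by positivity) ?_ ?_
  · rintro _ ⟨k, rfl⟩
    exact infDist_image_le hC₀ hstep hquasi hf hnear k
  · rintro _ ⟨s, hs, rfl⟩
    exact (hnear s hs).trans (by nlinarith)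
end

section
/- Let γ : Fin (n+1) → V be an injective path in a graph of maximum degree at most d, and fix r ≥ 0 and c > 0. Suppose at least c·n of the points γ i lie within graph distance r of some geodesic segment from γ 0 to γ n. Then dist(γ 0, γ n) ≥ c·n / (d+1)^r − 1. -/
/-!
Since every vertex has at most `d` neighbours, a closed ball of radius `r` has at most
`(d+1)^r` vertices, so the `r`-neighbourhood of a geodesic with `L + 1` vertices has at most
`(L+1)(d+1)^r` vertices. The points `γ i` near the geodesic are distinct by injectivity of `γ`,
hence `c n ≤ (L+1)(d+1)^r` with `L = dist (γ 0) (γ n)`.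
-/

open Finset

namespace SimpleGraph

theorem reachable_of_adj_castSucc_succ {V : Type*} {G : SimpleGraph V} {n : ℕ}
    {f : Fin (n + 1) → V} (hf : ∀ i : Fin n, G.Adj (f i.castSucc) (f i.succ))
    (i : Fin (n + 1)) :
    G.Reachable (f 0) (f i) := by
  induction i using Fin.induction with
  | zero => rfl
  | succ i ih => exact ih.trans (hf i).reachable

variable {V : Type*} [Fintype V] (G : SimpleGraph V)

-- `edist` rather than `dist`: vertices unreachable from `u` have `dist` zero.
noncomputable def closedBallFinset (u : V) (r : ℕ) : Finset V :=
  univ.filter fun v => G.edist u v ≤ r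

variable {G}

theorem mem_closedBallFinset {u v : V} {r : ℕ} :
    v ∈ G.closedBallFinset u r ↔ G.edist u v ≤ r := by
  simp [closedBallFinset]

theorem closedBallFinset_zero (u : V) : G.closedBallFinset u 0 = {u} := by
  ext v
  rw [mem_closedBallFinset, mem_singleton, Nat.cast_zero, nonpos_iff_eq_zero, edist_eq_zero_iff]
  exact eq_comm

variable [DecidableEq V] [DecidableRel G.Adj]

theorem closedBallFinset_succ_subset (u : V) (r : ℕ) :
    G.closedBallFinset u (r + 1) ⊆
      (insert u (G.neighborFinset u)).biUnion fun w => G.closedBallFinset w r := by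
  intro v hv
  rw [mem_closedBallFinset] at hv
  simp only [mem_biUnion, mem_insert, mem_neighborFinset, mem_closedBallFinset]
  by_cases huv : u = v
  · exact ⟨u, .inl rfl, by simp [huv]⟩
  have hreach : G.Reachable u v := reachable_of_edist_ne_top (ne_top_of_le_ne_top (by simp) hv)
  obtain ⟨q, hq⟩ := hreach.exists_walk_length_eq_edist
  obtain ⟨w, hadj, q', rfl⟩ := Walk.exists_eq_cons_of_ne huv q
  refine ⟨w, .inr hadj, (edist_le q').trans ?_⟩
  rw [← hq, Walk.length_cons] at hv
  exact_mod_cast Nat.le_of_succ_le_succ (by exact_mod_cast hv)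

theorem card_closedBallFinset_le {d : ℕ} (hdeg : ∀ v, G.degree v ≤ d) (u : V) (r : ℕ) :
    #(G.closedBallFinset u r) ≤ (d + 1) ^ r := by
  induction r generalizing u with
  | zero => simp [closedBallFinset_zero]
  | succ r ih =>
    calc #(G.closedBallFinset u (r + 1))
        ≤ ∑ w ∈ insert u (G.neighborFinset u), #(G.closedBallFinset w r) :=
          (card_le_card (closedBallFinset_succ_subset u r)).trans card_biUnion_le
      _ ≤ #(insert u (G.neighborFinset u)) * (d + 1) ^ r :=
          sum_le_card_nsmul _ _ _ fun w _ => ih w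
      _ ≤ (d + 1) * (d + 1) ^ r := by
          gcongr
          exact (card_insert_le _ _).trans (by simpa using hdeg u)
      _ = (d + 1) ^ (r + 1) := by ring

theorem card_filter_exists_dist_le_le {ι κ : Type*} [Fintype ι] [Fintype κ] {d : ℕ}
    (hdeg : ∀ v, G.degree v ≤ d) {γ : ι → V} (hγ : Function.Injective γ) (p : κ → V)
    (hreach : ∀ i j, G.Reachable (γ i) (p j)) (r : ℕ) :
    #(univ.filter fun i => ∃ j, G.dist (γ i) (p j) ≤ r) ≤ Fintype.card κ * (d + 1) ^ r := by
  set F := univ.filter fun i => ∃ j, G.dist (γ i) (p j) ≤ r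
  have hsub : F.image γ ⊆ univ.biUnion fun j => G.closedBallFinset (p j) r := by
    simp only [subset_iff, mem_image, mem_filter, mem_univ, true_and, F]
    rintro _ ⟨i, ⟨j, hj⟩, rfl⟩
    refine mem_biUnion.mpr ⟨j, mem_univ _, mem_closedBallFinset.mpr ?_⟩
    rw [edist_comm, ← (hreach i j).coe_dist_eq_edist]
    exact_mod_cast hj
  calc #F = #(F.image γ) := (card_image_of_injective _ hγ).symm
    _ ≤ ∑ j, #(G.closedBallFinset (p j) r) := (card_le_card hsub).trans card_biUnion_le
    _ ≤ Fintype.card κ * (d + 1) ^ r :=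
        (sum_le_card_nsmul _ _ _ fun j _ => card_closedBallFinset_le hdeg (p j) r).trans_eq
          (by rw [Finset.card_univ, smul_eq_mul])

end SimpleGraph

theorem stmt_15_general {V : Type*} [Fintype V] [DecidableEq V]
    (G : SimpleGraph V) [DecidableRel G.Adj]
    (d : ℕ) (hdeg : ∀ v : V, G.degree v ≤ d)
    {n : ℕ} (γ : Fin (n + 1) → V) (hinj : Function.Injective γ)
    (hwalk : ∀ i : Fin n, G.Adj (γ i.castSucc) (γ i.succ))
    (r : ℕ) (c : ℝ)
    (L : ℕ) (hL : L = G.dist (γ 0) (γ (Fin.last n))) (p : Fin (L + 1) → V)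
    (hgeo : ∀ i j : Fin (L + 1), (G.dist (p i) (p j) : ℤ) = |(i : ℤ) - (j : ℤ)|)
    (hp₀ : p 0 = γ 0)
    (hnear : c * n ≤
      ((univ.filter (fun i : Fin (n + 1) =>
        ∃ j : Fin (L + 1), G.dist (γ i) (p j) ≤ r)).card : ℝ)) :
    (G.dist (γ 0) (γ (Fin.last n)) : ℝ) ≥ c * n / (d + 1) ^ r - 1 := by
  have hp : ∀ j, G.Reachable (p 0) (p j) := fun j => by
    by_cases hj : j = 0
    · rw [hj]
    · refine SimpleGraph.Reachable.of_dist_ne_zero fun h => hj ?_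
      have := hgeo 0 j
      rw [h, Fin.val_zero, Nat.cast_zero, zero_sub, abs_neg, Nat.abs_cast] at this
      exact_mod_cast this.symm
  have hreach : ∀ i j, G.Reachable (γ i) (p j) := fun i j =>
    (SimpleGraph.reachable_of_adj_castSucc_succ hwalk i).symm.trans (hp₀ ▸ hp j)
  have hcard :
      #(univ.filter fun i => ∃ j, G.dist (γ i) (p j) ≤ r) ≤ (L + 1) * (d + 1) ^ r := by
    convert SimpleGraph.card_filter_exists_dist_le_le hdeg hinj p hreach r
    exact (Fintype.card_fin _).symm
  have hcn : c * n ≤ (L + 1) * ((d : ℝ) + 1) ^ r := hnear.trans (by exact_mod_cast hcard)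
  rw [← hL, ge_iff_le, sub_le_iff_le_add, div_le_iff₀ (by positivity)]
  exact hcn

/-- if a self-avoiding walk `γ` in a graph of maximum degree at most `d` has
at least `c·n` of its points within distance `r` of a geodesic segment from `γ 0` to
`γ n`, then `dist (γ 0) (γ n) ≥ c·n/(d+1)^r − 1`. -/
theorem stmt_15 {V : Type*} [Fintype V] [DecidableEq V]
    (G : SimpleGraph V) [DecidableRel G.Adj]
    (d : ℕ) (hdeg : ∀ v : V, G.degree v ≤ d)
    {n : ℕ} (γ : Fin (n + 1) → V) (hinj : Function.Injective γ)
    (hwalk : ∀ i : Fin n, G.Adj (γ i.castSucc) (γ i.succ))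
    (r : ℕ) (c : ℝ) (hc : 0 < c)
    (L : ℕ) (hL : L = G.dist (γ 0) (γ (Fin.last n))) (p : Fin (L + 1) → V)
    (hgeo : ∀ i j : Fin (L + 1), (G.dist (p i) (p j) : ℤ) = |(i : ℤ) - (j : ℤ)|)
    (hp₀ : p 0 = γ 0) (hpL : p (Fin.last L) = γ (Fin.last n))
    (hnear : c * n ≤
      ((univ.filter (fun i : Fin (n + 1) =>
        ∃ j : Fin (L + 1), G.dist (γ i) (p j) ≤ r)).card : ℝ)) :
    (G.dist (γ 0) (γ (Fin.last n)) : ℝ) ≥ c * n / (d + 1) ^ r - 1 :=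
  stmt_15_general G d hdeg γ hinj hwalk r c L hL p hgeo hp₀ hnear
end
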